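/- Let μ > 0 and fix Λ > 0. Then lim_{k→0⁺} ∫_k^Λ ∫_{−k}^{k} (σ(p)·σ(l) − γ(p)·γ(l))² · p · l / (8k · (e(p) + e(l))) ds dt = ∫_0^Λ t²/(32·e(t/2)) dt, where p = (t+s)/2 and l = (t−s)/2; moreover the right-hand side is a finite strictly positive real number. -/

import Mathlib

open Real Filter Asymptotics Topology MeasureTheory

/-- Bogoliubov dispersion relation (contact interaction). -/
noncomputable def disp (μ k : ℝ) : ℝ := Real.sqrt (k^4/4 + μ*k^2)

/-- Bogoliubov coefficient σ. -/
noncomputable def sig (μ k : ℝ) : ℝ :=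
  Real.sqrt ((Real.sqrt ((disp μ k)^2 + μ^2) + disp μ k) / (2 * disp μ k))

/-- Bogoliubov coefficient γ. -/
noncomputable def gam (μ k : ℝ) : ℝ :=
  Real.sqrt ((Real.sqrt ((disp μ k)^2 + μ^2) - disp μ k) / (2 * disp μ k))

/-!
Write `e = disp μ`. Since `√(e(x)² + μ²) = x²/2 + μ`, the coefficients satisfy
`σ² = (x²/2 + μ + e)/(2e)`, `γ² = (x²/2 + μ - e)/(2e)` and `σγ = μ/(2e)`, whence
`(σ(p)σ(l) - γ(p)γ(l))² = (e(p)e(l) + p²l²/4 + μ(p² + l²)/2) / (2e(p)e(l))`.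
Together with `pl(μ + pl/4) ≤ e(p)e(l) ≤ p²l²/4 + μ(p² + l²)/2` this puts
`F(p, l) = bogKernel μ p l = (σ(p)σ(l) - γ(p)γ(l))² p l / (e(p) + e(l))` within `|p - l|/(4√μ)` of
`pl/(e(p) + e(l))`, and the Lipschitz bound for `e` on `[0, Λ]` together with `e(x) ≥ √μ x` puts
the latter within `O(|p - l|)` of its diagonal value `t²/(8e(t/2))`. Hence, uniformly in
`t ∈ (k, Λ]`, the mean of `F` over `s ∈ (-k, k)` is `t²/(8e(t/2)) + O(k)`, while the strip
`t ∈ (0, k)` missing from the outer integral contributes `o(1)`.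
-/

open Set Function

theorem IntervalIntegrable.of_abs_sub_le {f g : ℝ → ℝ} {a b D : ℝ} (hab : a ≤ b)
    (hf : AEStronglyMeasurable f (volume.restrict (Ioc a b)))
    (hg : IntervalIntegrable g volume a b) (hfg : ∀ x ∈ Ioc a b, |f x - g x| ≤ D) :
    IntervalIntegrable f volume a b := by
  rw [intervalIntegrable_iff_integrableOn_Ioc_of_le hab] at hg ⊢
  have hsub : IntegrableOn (fun x => f x - g x) (Ioc a b) :=
    (integrable_const D).mono' (hf.sub hg.aestronglyMeasurable) <| by
      filter_upwards [ae_restrict_mem measurableSet_Ioc] with x hx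
      exact hfg x hx
  exact (hsub.add hg).congr_fun (fun x _ => sub_add_cancel (f x) (g x)) measurableSet_Ioc

theorem abs_integral_sub_integral_le {f g : ℝ → ℝ} {a b D : ℝ} (hab : a ≤ b)
    (hf : IntervalIntegrable f volume a b) (hg : IntervalIntegrable g volume a b)
    (hfg : ∀ x ∈ Ioc a b, |f x - g x| ≤ D) :
    |(∫ x in a..b, f x) - ∫ x in a..b, g x| ≤ D * (b - a) := by
  rw [← intervalIntegral.integral_sub hf hg]
  simpa [abs_of_nonneg (sub_nonneg.2 hab), uIoc_of_le hab] using
    intervalIntegral.norm_integral_le_of_norm_le_const (a := a) (b := b)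
      (f := fun x => f x - g x) (C := D) (by simpa [uIoc_of_le hab] using hfg)

theorem abs_integral_div_two_mul_sub_le {G : ℝ → ℝ} {c D k : ℝ} (hk : 0 < k)
    (hG : Measurable G) (hGc : ∀ s ∈ Ioc (-k) k, |G s - c| ≤ D) :
    |(∫ s in (-k)..k, G s / (2 * k)) - c| ≤ D := by
  have hD : ∀ s ∈ Ioc (-k) k, |G s / (2 * k) - c / (2 * k)| ≤ D / (2 * k) := fun s hs => by
    rw [← sub_div, abs_div, abs_of_pos (by positivity : (0:ℝ) < 2 * k)]
    gcongr
    exact hGc s hs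
  have hconst := intervalIntegrable_const (μ := volume) (a := -k) (b := k) (c := c / (2 * k))
  have h := abs_integral_sub_integral_le (by linarith)
    (IntervalIntegrable.of_abs_sub_le (by linarith) (hG.div_const _).aestronglyMeasurable
      hconst hD) hconst hD
  rwa [intervalIntegral.integral_const, smul_eq_mul, sub_neg_eq_add, ← two_mul,
    mul_div_cancel₀ _ (by positivity), div_mul_cancel₀ _ (by positivity)] at h

theorem tendsto_integral_integral_div_two_mul {G : ℝ → ℝ → ℝ} {g : ℝ → ℝ} {Λ C : ℝ}
    (hΛ : 0 < Λ) (hG : Measurable (uncurry G)) (hg : IntervalIntegrable g volume 0 Λ)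
    (hGg : ∀ t s, |s| < t → t ≤ Λ → |G t s - g t| ≤ C * |s|) :
    Tendsto (fun k => ∫ t in k..Λ, ∫ s in (-k)..k, G t s / (2 * k)) (𝓝[>] 0)
      (𝓝 (∫ t in (0:ℝ)..Λ, g t)) := by
  have htail : Tendsto (fun k => ∫ t in k..Λ, g t) (𝓝[>] 0) (𝓝 (∫ t in (0:ℝ)..Λ, g t)) := by
    have hcont := intervalIntegral.continuousOn_primitive_interval_left
      ((intervalIntegrable_iff' (f := g)).1 hg) 0 left_mem_uIcc
    rw [uIcc_of_le hΛ.le] at hcont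
    exact (hcont.mono_of_mem_nhdsWithin (Icc_mem_nhdsGT hΛ)).tendsto
  have hclose : ∀ k ∈ Ioo 0 Λ,
      |(∫ t in k..Λ, ∫ s in (-k)..k, G t s / (2 * k)) - ∫ t in k..Λ, g t| ≤
        |C| * k * (Λ - k) := by
    rintro k ⟨hk, hkΛ⟩
    have hinner : ∀ t ∈ Ioc k Λ, |(∫ s in (-k)..k, G t s / (2 * k)) - g t| ≤ |C| * k :=
      fun t ht => abs_integral_div_two_mul_sub_le hk (hG.comp measurable_prodMk_left)
        fun s hs => by
          have hsk : |s| ≤ k := abs_le.2 ⟨hs.1.le, hs.2⟩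
          calc |G t s - g t| ≤ C * |s| := hGg t s (hsk.trans_lt ht.1) ht.2
            _ ≤ |C| * k := by gcongr; exact le_abs_self C
    have hgk : IntervalIntegrable g volume k Λ :=
      hg.mono_set (by rw [uIcc_of_le hkΛ.le, uIcc_of_le hΛ.le]; exact Icc_subset_Icc_left hk.le)
    have hmeas : AEStronglyMeasurable (fun t => ∫ s in (-k)..k, G t s / (2 * k))
        (volume.restrict (Ioc k Λ)) := by
      simp_rw [intervalIntegral.integral_of_le (neg_le_self hk.le)]
      exact (hG.div_const _).stronglyMeasurable.integral_prod_right'.aestronglyMeasurable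
    exact abs_integral_sub_integral_le hkΛ.le
      (IntervalIntegrable.of_abs_sub_le hkΛ.le hmeas hgk hinner) hgk hinner
  have hbound : Tendsto (fun k => |C| * k * (Λ - k)) (𝓝[>] 0) (𝓝 0) :=
    tendsto_nhdsWithin_of_tendsto_nhds (Continuous.tendsto' (by fun_prop) _ _ (by simp))
  have hdiff : Tendsto (fun k => (∫ t in k..Λ, ∫ s in (-k)..k, G t s / (2 * k)) -
      ∫ t in k..Λ, g t) (𝓝[>] 0) (𝓝 0) := by
    refine squeeze_zero_norm' ?_ hbound
    filter_upwards [Ioo_mem_nhdsGT hΛ] with k hk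
    exact hclose k hk
  simpa using hdiff.add htail

noncomputable def bogKernel (μ p l : ℝ) : ℝ :=
  (sig μ p * sig μ l - gam μ p * gam μ l) ^ 2 * p * l / (disp μ p + disp μ l)

section

variable {μ : ℝ}

theorem disp_eq_abs_mul_sqrt (μ x : ℝ) : disp μ x = |x| * √(μ + x ^ 2 / 4) := by
  rw [disp, show x ^ 4 / 4 + μ * x ^ 2 = x ^ 2 * (μ + x ^ 2 / 4) by ring,
    Real.sqrt_mul (sq_nonneg x), Real.sqrt_sq_eq_abs]

theorem disp_eq_mul_sqrt (μ : ℝ) {x : ℝ} (hx : 0 ≤ x) : disp μ x = x * √(μ + x ^ 2 / 4) := by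
  rw [disp_eq_abs_mul_sqrt, abs_of_nonneg hx]

theorem disp_nonneg (μ x : ℝ) : 0 ≤ disp μ x := Real.sqrt_nonneg _

theorem disp_zero (μ : ℝ) : disp μ 0 = 0 := by simp [disp]

theorem disp_pos (hμ : 0 ≤ μ) {x : ℝ} (hx : x ≠ 0) : 0 < disp μ x :=
  Real.sqrt_pos.2 (by positivity)

theorem sqrt_mul_le_disp (μ : ℝ) {x : ℝ} (hx : 0 ≤ x) : √μ * x ≤ disp μ x := by
  rw [disp_eq_mul_sqrt μ hx, mul_comm]
  exact mul_le_mul_of_nonneg_left (Real.sqrt_le_sqrt (by linarith [sq_nonneg x])) hx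

theorem sqrt_disp_sq_add_sq (hμ : 0 ≤ μ) (x : ℝ) : √(disp μ x ^ 2 + μ ^ 2) = x ^ 2 / 2 + μ := by
  rw [disp, Real.sq_sqrt (by positivity : 0 ≤ x ^ 4 / 4 + μ * x ^ 2),
    show x ^ 4 / 4 + μ * x ^ 2 + μ ^ 2 = (x ^ 2 / 2 + μ) ^ 2 by ring, Real.sqrt_sq (by positivity)]

theorem mul_mul_add_le_disp_mul_disp (hμ : 0 ≤ μ) {p l : ℝ} (hp : 0 ≤ p) (hl : 0 ≤ l) :
    p * l * (μ + p * l / 4) ≤ disp μ p * disp μ l := by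
  rw [disp, disp, ← Real.sqrt_mul (by positivity), Real.le_sqrt (by positivity) (by positivity)]
  nlinarith [mul_nonneg (mul_nonneg hμ (sq_nonneg (p * l))) (sq_nonneg (p - l))]

theorem disp_mul_disp_le (hμ : 0 ≤ μ) (p l : ℝ) :
    disp μ p * disp μ l ≤ p ^ 2 * l ^ 2 / 4 + μ * (p ^ 2 + l ^ 2) / 2 := by
  rw [disp, disp, ← Real.sqrt_mul (by positivity)]
  refine Real.sqrt_le_iff.2 ⟨by positivity, ?_⟩
  nlinarith [mul_nonneg (sq_nonneg μ) (sq_nonneg (p ^ 2 - l ^ 2))]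

theorem exists_lipschitzOnWith_disp (hμ : 0 < μ) (Λ : ℝ) :
    ∃ K, LipschitzOnWith K (disp μ) (Icc 0 Λ) := by
  have hsmooth : ContDiff ℝ 1 fun x : ℝ => x * √(μ + x ^ 2 / 4) :=
    contDiff_id.mul (ContDiff.sqrt (by fun_prop) fun x => by positivity)
  exact (hsmooth.contDiffOn.congr fun x hx => disp_eq_mul_sqrt μ hx.1).exists_lipschitzOnWith
    one_ne_zero (convex_Icc 0 Λ) isCompact_Icc

theorem sig_sq (hμ : 0 ≤ μ) (x : ℝ) :
    sig μ x ^ 2 = (x ^ 2 / 2 + μ + disp μ x) / (2 * disp μ x) := by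
  have he := disp_nonneg μ x
  rw [sig, Real.sq_sqrt (by positivity), sqrt_disp_sq_add_sq hμ]

theorem gam_sq (hμ : 0 ≤ μ) (x : ℝ) :
    gam μ x ^ 2 = (x ^ 2 / 2 + μ - disp μ x) / (2 * disp μ x) := by
  have he := disp_nonneg μ x
  have hle : disp μ x ≤ x ^ 2 / 2 + μ := by
    rw [← sqrt_disp_sq_add_sq hμ]
    exact Real.le_sqrt_of_sq_le (by nlinarith)
  rw [gam, sqrt_disp_sq_add_sq hμ, Real.sq_sqrt (by apply div_nonneg <;> linarith)]

theorem sig_mul_gam (hμ : 0 ≤ μ) (x : ℝ) : sig μ x * gam μ x = μ / (2 * disp μ x) := by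
  have he := disp_nonneg μ x
  have hE : (√(disp μ x ^ 2 + μ ^ 2) + disp μ x) * (√(disp μ x ^ 2 + μ ^ 2) - disp μ x) =
      μ ^ 2 := by
    linear_combination Real.sq_sqrt (by positivity : 0 ≤ disp μ x ^ 2 + μ ^ 2)
  rw [sig, gam, ← Real.sqrt_mul (by positivity), div_mul_div_comm, hE,
    ← Real.sqrt_sq (div_nonneg hμ (by linarith) : 0 ≤ μ / (2 * disp μ x))]
  ring_nf

theorem sq_sig_mul_sig_sub_gam_mul_gam (hμ : 0 ≤ μ) {p l : ℝ} (hp : p ≠ 0) (hl : l ≠ 0) :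
    (sig μ p * sig μ l - gam μ p * gam μ l) ^ 2 =
      (disp μ p * disp μ l + p ^ 2 * l ^ 2 / 4 + μ * (p ^ 2 + l ^ 2) / 2) /
        (2 * (disp μ p * disp μ l)) := by
  have hep := (disp_pos hμ hp).ne'
  have hel := (disp_pos hμ hl).ne'
  rw [show (sig μ p * sig μ l - gam μ p * gam μ l) ^ 2 = sig μ p ^ 2 * sig μ l ^ 2 +
      gam μ p ^ 2 * gam μ l ^ 2 - 2 * (sig μ p * gam μ p) * (sig μ l * gam μ l) by ring,
    sig_sq hμ, sig_sq hμ, gam_sq hμ, gam_sq hμ, sig_mul_gam hμ, sig_mul_gam hμ]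
  field_simp
  ring

theorem bogKernel_sub_mul_div_eq (hμ : 0 ≤ μ) {p l : ℝ} (hp : p ≠ 0) (hl : l ≠ 0) :
    bogKernel μ p l - p * l / (disp μ p + disp μ l) =
      (p ^ 2 * l ^ 2 / 4 + μ * (p ^ 2 + l ^ 2) / 2 - disp μ p * disp μ l) * (p * l) /
        (2 * (disp μ p * disp μ l) * (disp μ p + disp μ l)) := by
  have hep := disp_pos hμ hp
  have hel := disp_pos hμ hl
  rw [bogKernel, sq_sig_mul_sig_sub_gam_mul_gam hμ hp hl]
  field_simp
  ring

theorem abs_bogKernel_sub_mul_div_le (hμ : 0 < μ) {p l : ℝ} (hp : 0 < p) (hl : 0 < l) :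
    |bogKernel μ p l - p * l / (disp μ p + disp μ l)| ≤ |p - l| / (4 * √μ) := by
  have hep := disp_pos hμ.le hp.ne'
  have hel := disp_pos hμ.le hl.ne'
  have hlow := mul_mul_add_le_disp_mul_disp hμ.le hp.le hl.le
  have hX0 := sub_nonneg.2 (disp_mul_disp_le hμ.le p l)
  have hX : p ^ 2 * l ^ 2 / 4 + μ * (p ^ 2 + l ^ 2) / 2 - disp μ p * disp μ l ≤
      μ * (p - l) ^ 2 / 2 := by nlinarith
  have hee : μ * (p * l) ≤ disp μ p * disp μ l := by nlinarith [mul_pos hp hl]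
  have hsum : √μ * (p + l) ≤ disp μ p + disp μ l := by
    nlinarith [sqrt_mul_le_disp μ hp.le, sqrt_mul_le_disp μ hl.le]
  rw [bogKernel_sub_mul_div_eq hμ.le hp.ne' hl.ne', abs_of_nonneg (by positivity)]
  calc _ ≤ μ * (p - l) ^ 2 / 2 * (p * l) / (2 * (μ * (p * l)) * (√μ * (p + l))) := by gcongr
    _ = |p - l| / (4 * √μ) * (|p - l| / (p + l)) := by
        rw [← sq_abs (p - l)]; field_simp; ring
    _ ≤ |p - l| / (4 * √μ) := by
        refine mul_le_of_le_one_right (by positivity) ((div_le_one (by positivity)).2 ?_)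
        exact abs_sub_le_iff.2 ⟨by linarith, by linarith⟩

theorem abs_disp_sub_disp_le {K : NNReal} {Λ x y : ℝ} (hK : LipschitzOnWith K (disp μ) (Icc 0 Λ))
    (hx : x ∈ Icc 0 Λ) (hy : y ∈ Icc 0 Λ) : |disp μ x - disp μ y| ≤ K * |x - y| := by
  simpa only [Real.dist_eq] using hK.dist_le_mul x hx y hy

theorem abs_mul_div_disp_add_disp_sub_le (hμ : 0 < μ) {K : NNReal} {Λ : ℝ}
    (hK : LipschitzOnWith K (disp μ) (Icc 0 Λ)) {t s : ℝ} (hst : |s| < t) (htΛ : t ≤ Λ) :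
    |(t + s) / 2 * ((t - s) / 2) / (disp μ ((t + s) / 2) + disp μ ((t - s) / 2)) -
      t ^ 2 / (8 * disp μ (t / 2))| ≤ K / (2 * μ) * |s| := by
  obtain ⟨hs₁, hs₂⟩ := abs_lt.1 hst
  have ht : 0 < t := (abs_nonneg s).trans_lt hst
  have mem : ∀ x, 0 ≤ x → x ≤ t → x ∈ Icc 0 Λ := fun x h0 ht => ⟨h0, ht.trans htΛ⟩
  set ep := disp μ ((t + s) / 2)
  set el := disp μ ((t - s) / 2)
  set em := disp μ (t / 2)
  have hmid : |2 * em - ep - el| ≤ K * |s| := by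
    have hp := abs_disp_sub_disp_le hK (mem (t / 2) (by linarith) (by linarith))
      (mem ((t + s) / 2) (by linarith) (by linarith))
    have hl := abs_disp_sub_disp_le hK (mem (t / 2) (by linarith) (by linarith))
      (mem ((t - s) / 2) (by linarith) (by linarith))
    rw [show t / 2 - (t + s) / 2 = -s / 2 by ring, abs_div, abs_neg, abs_two] at hp
    rw [show t / 2 - (t - s) / 2 = s / 2 by ring, abs_div, abs_two] at hl
    calc |2 * em - ep - el| ≤ |em - ep| + |em - el| := by
          rw [show 2 * em - ep - el = (em - ep) + (em - el) by ring]; exact abs_add_le _ _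
      _ ≤ K * |s| := by linarith
  have hem_le : em ≤ K * (t / 2) := by
    have h := abs_disp_sub_disp_le hK (mem (t / 2) (by linarith) (by linarith))
      (mem 0 le_rfl ht.le)
    rwa [disp_zero, sub_zero, sub_zero, abs_of_nonneg (disp_nonneg _ _),
      abs_of_pos (by linarith)] at h
  have hem : √μ * (t / 2) ≤ em := sqrt_mul_le_disp μ (by linarith)
  have hsum : √μ * t ≤ ep + el := by
    nlinarith [sqrt_mul_le_disp μ (x := (t + s) / 2) (by linarith),
      sqrt_mul_le_disp μ (x := (t - s) / 2) (by linarith)]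
  have hs2 : s ^ 2 ≤ t * |s| := by rw [← sq_abs]; nlinarith [abs_nonneg s]
  have hem0 : 0 < em := lt_of_lt_of_le (by positivity) hem
  have hsum0 : 0 < ep + el := lt_of_lt_of_le (by positivity) hsum
  have hnum : |t ^ 2 * (2 * em - ep - el) - 2 * s ^ 2 * em| ≤ 2 * K * t ^ 2 * |s| := by
    calc _ ≤ t ^ 2 * |2 * em - ep - el| + 2 * s ^ 2 * em := by
          refine (abs_sub _ _).trans_eq ?_
          rw [abs_mul, abs_of_nonneg (by positivity : 0 ≤ t ^ 2),
            abs_of_nonneg (by positivity : 0 ≤ 2 * s ^ 2 * em)]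
      _ ≤ t ^ 2 * (K * |s|) + 2 * (t * |s|) * (K * (t / 2)) := by gcongr
      _ = 2 * K * t ^ 2 * |s| := by ring
  have hden : 4 * μ * t ^ 2 ≤ (ep + el) * (8 * em) := by
    calc 4 * μ * t ^ 2 = (√μ * t) * (8 * (√μ * (t / 2))) := by
          rw [show (√μ * t) * (8 * (√μ * (t / 2))) = √μ ^ 2 * (4 * t ^ 2) by ring,
            Real.sq_sqrt hμ.le]; ring
      _ ≤ (ep + el) * (8 * em) := by gcongr
  rw [div_sub_div _ _ hsum0.ne' (by positivity), abs_div,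
    abs_of_pos (mul_pos hsum0 (by positivity) : 0 < (ep + el) * (8 * em))]
  calc _ = |t ^ 2 * (2 * em - ep - el) - 2 * s ^ 2 * em| / ((ep + el) * (8 * em)) := by
        congr 2; ring
    _ ≤ (2 * K * t ^ 2 * |s|) / (4 * μ * t ^ 2) := by gcongr
    _ = K / (2 * μ) * |s| := by field_simp; ring

theorem exists_abs_bogKernel_sub_le (hμ : 0 < μ) (Λ : ℝ) : ∃ C, ∀ t s, |s| < t → t ≤ Λ →
    |bogKernel μ ((t + s) / 2) ((t - s) / 2) - t ^ 2 / (8 * disp μ (t / 2))| ≤ C * |s| := by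
  obtain ⟨K, hK⟩ := exists_lipschitzOnWith_disp hμ Λ
  refine ⟨K / (2 * μ) + 1 / (4 * √μ), fun t s hst htΛ => ?_⟩
  obtain ⟨hs₁, hs₂⟩ := abs_lt.1 hst
  have hW := abs_bogKernel_sub_mul_div_le hμ (p := (t + s) / 2) (l := (t - s) / 2)
    (by linarith) (by linarith)
  rw [show (t + s) / 2 - (t - s) / 2 = s by ring] at hW
  have hA := abs_mul_div_disp_add_disp_sub_le hμ hK hst htΛ
  calc _ ≤ _ := abs_sub_le _ ((t + s) / 2 * ((t - s) / 2) /
        (disp μ ((t + s) / 2) + disp μ ((t - s) / 2))) _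
    _ ≤ _ := add_le_add hW hA
    _ = _ := by ring

theorem sq_div_disp_half_eq (μ t : ℝ) :
    t ^ 2 / (32 * disp μ (t / 2)) = |t| / (16 * √(μ + t ^ 2 / 16)) := by
  rcases eq_or_ne t 0 with rfl | ht
  · simp
  rw [disp_eq_abs_mul_sqrt, abs_div, abs_two, show μ + (t / 2) ^ 2 / 4 = μ + t ^ 2 / 16 by ring]
  field_simp
  rw [sq_abs]
  ring

theorem continuous_sq_div_disp_half (hμ : 0 < μ) :
    Continuous fun t => t ^ 2 / (32 * disp μ (t / 2)) := by
  simp_rw [sq_div_disp_half_eq]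
  exact continuous_abs.div (by fun_prop) fun t => by positivity

end

theorem stmt19 (μ Λ : ℝ) (hμ : 0 < μ) (hΛ : 0 < Λ) :
    Tendsto (fun k => ∫ t in k..Λ, ∫ s in (-k)..k,
        (sig μ ((t+s)/2) * sig μ ((t-s)/2) - gam μ ((t+s)/2) * gam μ ((t-s)/2))^2
            * ((t+s)/2) * ((t-s)/2)
          / (8*k*(disp μ ((t+s)/2) + disp μ ((t-s)/2))))
      (𝓝[>] (0:ℝ))
      (𝓝 (∫ t in (0:ℝ)..Λ, t^2 / (32 * disp μ (t/2)))) ∧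
    IntervalIntegrable (fun t => t^2 / (32 * disp μ (t/2)))
      MeasureTheory.volume 0 Λ ∧
    0 < ∫ t in (0:ℝ)..Λ, t^2 / (32 * disp μ (t/2)) := by
  have hg := (continuous_sq_div_disp_half hμ).intervalIntegrable (μ := volume) 0 Λ
  refine ⟨?_, hg, intervalIntegral.intervalIntegral_pos_of_pos_on hg (fun t ht => ?_) hΛ⟩
  · obtain ⟨C, hC⟩ := exists_abs_bogKernel_sub_le hμ Λ
    have hG : Measurable (uncurry fun t s => bogKernel μ ((t + s) / 2) ((t - s) / 2) / 4) := by
      unfold bogKernel sig gam disp; fun_prop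
    have h := tendsto_integral_integral_div_two_mul hΛ hG hg (C := C / 4) fun t s hst htΛ => by
      rw [show bogKernel μ ((t + s) / 2) ((t - s) / 2) / 4 - t ^ 2 / (32 * disp μ (t / 2)) =
        (bogKernel μ ((t + s) / 2) ((t - s) / 2) - t ^ 2 / (8 * disp μ (t / 2))) / 4 by ring,
        abs_div, abs_of_pos (by norm_num : (0:ℝ) < 4)]
      linarith [hC t s hst htΛ]
    have hk : ∀ k t s, bogKernel μ ((t + s) / 2) ((t - s) / 2) / 4 / (2 * k) =
        (sig μ ((t+s)/2) * sig μ ((t-s)/2) - gam μ ((t+s)/2) * gam μ ((t-s)/2))^2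
          * ((t+s)/2) * ((t-s)/2) / (8*k*(disp μ ((t+s)/2) + disp μ ((t-s)/2))) := by
      intro k t s
      rw [bogKernel, div_div, div_div]
      congr 1
      ring
    simpa only [hk] using h
  · exact div_pos (pow_pos ht.1 2) (mul_pos (by norm_num) (disp_pos hμ.le (by linarith [ht.1])))
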